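/- arXiv:1703.00323 — 9 statements merged into one kernel-verified Lean document; each statement's English description precedes it below -/
import Mathlib

section
/- Let Q(x) = x^2 - p x + q with Δ = p^2 - 4q ≠ 0 and F = -1/Q. Then at every point where Q ≠ 0, Δ^2 * F^3 = (1/2) * (Q')^2 * F'' + 7 * Q' * F' + 16 * F. -/
/-!
Writing `F = -Q⁻¹`, one has the Riccati-type relation `F' = Q' F²`, hence `F'' = Q'' F² + 2 Q'² F³`.
For the monic quadratic `Q'' = 2` and `Q'² = 4 Q + Δ`, so after substituting `Q = -F⁻¹` the
right-hand side collapses to `Δ² F³`.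
-/

open Filter Topology

theorem hasDerivAt_neg_inv {Q : ℝ → ℝ} {Q' x : ℝ} (hQ : HasDerivAt Q Q' x) (hx : Q x ≠ 0) :
    HasDerivAt (fun y => -(Q y)⁻¹) (Q' * (-(Q x)⁻¹) ^ 2) x :=
  (hQ.fun_inv hx).fun_neg.congr_deriv (by field_simp)

theorem deriv_deriv_neg_inv {Q Q' : ℝ → ℝ} {Q'' x : ℝ} (hQ : ∀ y, HasDerivAt Q (Q' y) y)
    (hQ' : HasDerivAt Q' Q'' x) (hx : Q x ≠ 0) :
    deriv (deriv fun y => -(Q y)⁻¹) x =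
      Q'' * (-(Q x)⁻¹) ^ 2 + 2 * Q' x ^ 2 * (-(Q x)⁻¹) ^ 3 := by
  have hderiv : deriv (fun y => -(Q y)⁻¹) =ᶠ[𝓝 x] fun y => Q' y * (-(Q y)⁻¹) ^ 2 := by
    filter_upwards [(hQ x).continuousAt.eventually_ne hx] with y hy
    exact (hasDerivAt_neg_inv (hQ y) hy).deriv
  rw [hderiv.deriv_eq, (hQ'.fun_mul ((hasDerivAt_neg_inv (hQ x) hx).fun_pow 2)).deriv]
  ring

theorem hasDerivAt_quadratic (p q x : ℝ) :
    HasDerivAt (fun y => y ^ 2 - p * y + q) (2 * x - p) x := by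
  simpa using (((hasDerivAt_pow 2 x).sub ((hasDerivAt_id x).const_mul p)).add_const q)

theorem F_cube_eq_general (p q : ℝ)
    (Q F : ℝ → ℝ) (hQ : ∀ x, Q x = x ^ 2 - p * x + q)
    (hF : ∀ x, F x = -1 / Q x) :
    ∀ x, Q x ≠ 0 →
      (p ^ 2 - 4 * q) ^ 2 * (F x) ^ 3 =
        (1 / 2) * (deriv Q x) ^ 2 * deriv (deriv F) x
          + 7 * deriv Q x * deriv F x + 16 * F x := by
  intro x hx
  have hFfun : F = fun y => -(Q y)⁻¹ := funext fun y => by rw [hF, neg_div, one_div]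
  have hQ' : ∀ y, HasDerivAt Q (2 * y - p) y := fun y => funext hQ ▸ hasDerivAt_quadratic p q y
  have hQ'' : HasDerivAt (fun y => 2 * y - p) 2 x := by
    simpa using ((hasDerivAt_id x).const_mul 2).sub_const p
  rw [hFfun, deriv_deriv_neg_inv hQ' hQ'' hx, (hasDerivAt_neg_inv (hQ' x) hx).deriv, (hQ' x).deriv]
  beta_reduce
  rw [hQ x] at hx ⊢
  field_simp
  ring

theorem F_cube_eq (p q : ℝ) (hΔ : p ^ 2 - 4 * q ≠ 0)
    (Q F : ℝ → ℝ) (hQ : ∀ x, Q x = x ^ 2 - p * x + q)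
    (hF : ∀ x, F x = -1 / Q x) :
    ∀ x, Q x ≠ 0 →
      (p ^ 2 - 4 * q) ^ 2 * (F x) ^ 3 =
        (1 / 2) * (deriv Q x) ^ 2 * deriv (deriv F) x
          + 7 * deriv Q x * deriv F x + 16 * F x :=
  F_cube_eq_general p q Q F hQ hF
end

section
/- Let Q(x) = x^2 - p x + q with Δ = p^2 - 4q ≠ 0 and F = -1/Q. Then at every point where Q ≠ 0, Δ^3 * F^4 = (1/6) * (Q')^3 * F''' + 5 * (Q')^2 * F'' + 38 * Q' * F' + 64 * F. -/
/-!
Writing `D = Q'` and using `Q'' = 2`, the derivatives of `F = -1/Q` are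
`F' = D/Q²`, `F'' = (2Q - 2D²)/Q³` and `F''' = (6D³ - 12DQ)/Q⁴`, while `Δ = D² - 4Q`
identically. The claim thus becomes a polynomial identity in `D` and `Q` after clearing `Q⁴`.
-/

open Filter Topology

theorem discriminant_cube_mul_neg_inv_pow_four_eq {K : Type*} [Field K] [CharZero K] (D Q : K)
    (hQ : Q ≠ 0) :
    (D ^ 2 - 4 * Q) ^ 3 * (-1 / Q) ^ 4 =
      (1 / 6) * D ^ 3 * ((6 * D ^ 3 - 12 * D * Q) / Q ^ 4)
        + 5 * D ^ 2 * ((2 * Q - 2 * D ^ 2) / Q ^ 3)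
        + 38 * D * (D / Q ^ 2) + 64 * (-1 / Q) := by
  field_simp
  ring

section MonicQuadratic

variable {p q : ℝ} {Q : ℝ → ℝ}

theorem hasDerivAt_of_eq_quadratic (hQ : ∀ x, Q x = x ^ 2 - p * x + q) (x : ℝ) :
    HasDerivAt Q (2 * x - p) x := by
  obtain rfl : Q = fun x => x ^ 2 - p * x + q := funext hQ
  simpa using (((hasDerivAt_id x).pow 2).sub ((hasDerivAt_id x).const_mul p)).add_const q

theorem hasDerivAt_two_mul_sub (p x : ℝ) : HasDerivAt (fun z : ℝ => 2 * z - p) 2 x := by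
  simpa using ((hasDerivAt_id x).const_mul 2).sub_const p

variable (hQ : ∀ x, Q x = x ^ 2 - p * x + q)
include hQ

theorem isOpen_setOf_ne_zero_of_eq_quadratic : IsOpen {x | Q x ≠ 0} :=
  isOpen_ne_fun (continuous_iff_continuousAt.2 fun x =>
    (hasDerivAt_of_eq_quadratic hQ x).continuousAt) continuous_const

theorem deriv_neg_one_div_of_eq_quadratic {x : ℝ} (hx : Q x ≠ 0) :
    deriv (fun z => -1 / Q z) x = (2 * x - p) / Q x ^ 2 := by
  have h := (hasDerivAt_const x (-1 : ℝ)).fun_div (hasDerivAt_of_eq_quadratic hQ x) hx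
  rw [h.deriv]
  ring

theorem deriv_deriv_neg_one_div_of_eq_quadratic {x : ℝ} (hx : Q x ≠ 0) :
    deriv (deriv fun z => -1 / Q z) x = (2 * Q x - 2 * (2 * x - p) ^ 2) / Q x ^ 3 := by
  have hF' : deriv (fun z => -1 / Q z) =ᶠ[𝓝 x] fun z => (2 * z - p) / Q z ^ 2 :=
    eventually_of_mem ((isOpen_setOf_ne_zero_of_eq_quadratic hQ).mem_nhds hx)
      fun z hz => deriv_neg_one_div_of_eq_quadratic hQ hz
  have h := (hasDerivAt_two_mul_sub p x).fun_div ((hasDerivAt_of_eq_quadratic hQ x).fun_pow 2)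
    (pow_ne_zero 2 hx)
  rw [hF'.deriv_eq, h.deriv]
  push_cast
  field_simp

theorem deriv_deriv_deriv_neg_one_div_of_eq_quadratic {x : ℝ} (hx : Q x ≠ 0) :
    deriv (deriv (deriv fun z => -1 / Q z)) x =
      (6 * (2 * x - p) ^ 3 - 12 * (2 * x - p) * Q x) / Q x ^ 4 := by
  have hF'' : deriv (deriv fun z => -1 / Q z) =ᶠ[𝓝 x]
      fun z => (2 * Q z - 2 * (2 * z - p) ^ 2) / Q z ^ 3 :=
    eventually_of_mem ((isOpen_setOf_ne_zero_of_eq_quadratic hQ).mem_nhds hx)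
      fun z hz => deriv_deriv_neg_one_div_of_eq_quadratic hQ hz
  have hQ' := hasDerivAt_of_eq_quadratic hQ x
  have hnum := (hQ'.const_mul 2).fun_sub (((hasDerivAt_two_mul_sub p x).fun_pow 2).const_mul 2)
  have h := hnum.fun_div (hQ'.fun_pow 3) (pow_ne_zero 3 hx)
  rw [hF''.deriv_eq, h.deriv]
  push_cast
  field_simp
  ring

end MonicQuadratic

theorem F_fourth_eq_general (p q : ℝ)
    (Q F : ℝ → ℝ) (hQ : ∀ x, Q x = x ^ 2 - p * x + q)
    (hF : ∀ x, F x = -1 / Q x) :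
    ∀ x, Q x ≠ 0 →
      (p ^ 2 - 4 * q) ^ 3 * (F x) ^ 4 =
        (1 / 6) * (deriv Q x) ^ 3 * deriv (deriv (deriv F)) x
          + 5 * (deriv Q x) ^ 2 * deriv (deriv F) x
          + 38 * deriv Q x * deriv F x + 64 * F x := by
  intro x hx
  obtain rfl : F = fun z => -1 / Q z := funext hF
  have hΔ : p ^ 2 - 4 * q = (2 * x - p) ^ 2 - 4 * Q x := by rw [hQ]; ring
  rw [hΔ, (hasDerivAt_of_eq_quadratic hQ x).deriv, deriv_neg_one_div_of_eq_quadratic hQ hx,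
    deriv_deriv_neg_one_div_of_eq_quadratic hQ hx,
    deriv_deriv_deriv_neg_one_div_of_eq_quadratic hQ hx]
  exact discriminant_cube_mul_neg_inv_pow_four_eq _ _ hx

theorem F_fourth_eq (p q : ℝ) (hΔ : p ^ 2 - 4 * q ≠ 0)
    (Q F : ℝ → ℝ) (hQ : ∀ x, Q x = x ^ 2 - p * x + q)
    (hF : ∀ x, F x = -1 / Q x) :
    ∀ x, Q x ≠ 0 →
      (p ^ 2 - 4 * q) ^ 3 * (F x) ^ 4 =
        (1 / 6) * (deriv Q x) ^ 3 * deriv (deriv (deriv F)) x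
          + 5 * (deriv Q x) ^ 2 * deriv (deriv F) x
          + 38 * deriv Q x * deriv F x + 64 * F x :=
  F_fourth_eq_general p q Q F hQ hF
end

section
/- Define α̃(i,n) by the recurrence: α̃(i,n) = 0 if i < 0, n < 1, or i ≥ n; α̃(0,1) = 1; α̃(i, n+1) = (2i/n) α̃(i,n) + (1/n) α̃(i-1,n) + 4 α̃(i,n) otherwise. Then α̃(1,n) equals the coefficient sequence 0, 1, 7, 38, 187, 874, ... i.e. α̃(1,n) = Σ_{j=0}^{n-2} 4^(n-2-j) * (binomial(2j+1, j+1)) for n ≥ 2. -/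
private def S (n : ℕ) : ℚ :=
  ∑ j ∈ Finset.range (n - 1), (4 : ℚ) ^ (n - 2 - j) * ((2 * j + 1).choose (j + 1) : ℚ)

private lemma S_succ (m : ℕ) :
    S (m + 2) = 4 * S (m + 1) + ((2 * m + 1).choose (m + 1) : ℚ) := by
  unfold S
  have h1 : m + 2 - 1 = m + 1 := rfl
  have h2 : m + 1 - 1 = m := rfl
  rw [h1, h2, Finset.sum_range_succ]
  have h3 : m + 2 - 2 - m = 0 := by omega
  rw [h3, pow_zero, one_mul, Finset.mul_sum]
  congr 1
  apply Finset.sum_congr rfl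
  intro j hj
  simp only [Finset.mem_range] at hj
  have h4 : m + 2 - 2 - j = (m + 1 - 2 - j) + 1 := by omega
  rw [h4, pow_succ]
  ring

private lemma choose_identity (m : ℕ) :
    (m + 2) * Nat.choose (2 * m + 3) (m + 2) =
      2 * (2 * m + 3) * Nat.choose (2 * m + 1) (m + 1) := by
  have h1 : (2 * m + 3) * Nat.choose (2 * m + 2) (m + 1) =
      Nat.choose (2 * m + 3) (m + 2) * (m + 2) := by
    have := Nat.add_one_mul_choose_eq (2 * m + 2) (m + 1)
    simpa using this
  have h2 : Nat.choose (2 * m + 2) (m + 1) =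
      Nat.choose (2 * m + 1) m + Nat.choose (2 * m + 1) (m + 1) :=
    Nat.choose_succ_succ' (2 * m + 1) m ▸ rfl
  have h3 : Nat.choose (2 * m + 1) m = Nat.choose (2 * m + 1) (m + 1) := by
    have := Nat.choose_symm (show m + 1 ≤ 2 * m + 1 by omega)
    have e : 2 * m + 1 - (m + 1) = m := by omega
    rw [e] at this
    omega
  nlinarith [h1, h2, h3]

private lemma S_closed (m : ℕ) :
    2 * S (m + 1) = (m + 1) * ((2 * m + 1).choose (m + 1) : ℚ) - 4 ^ m := by
  induction m with
  | zero => simp [S]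
  | succ k ih =>
    rw [S_succ]
    have key : ((k + 2) * Nat.choose (2 * k + 3) (k + 2) : ℚ)
        = 2 * (2 * k + 3) * Nat.choose (2 * k + 1) (k + 1) := by
      exact_mod_cast congrArg (Nat.cast : ℕ → ℚ) (choose_identity k)
    have e1 : 2 * (k + 1) + 1 = 2 * k + 3 := by ring
    have e2 : k + 1 + 1 = k + 2 := rfl
    rw [e1, e2]
    push_cast at key ⊢
    linear_combination 4 * ih - key

private lemma S_rec (m : ℕ) :
    ((m : ℚ) + 1) * S (m + 2) = (4 * m + 6) * S (m + 1) + 4 ^ m := by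
  have h := S_closed m
  rw [S_succ]
  linear_combination -h

theorem alpha_tilde_second_column (a : ℤ → ℤ → ℚ)
    (h0 : ∀ i n : ℤ, (i < 0 ∨ n < 1 ∨ i ≥ n) → a i n = 0)
    (h1 : a 0 1 = 1)
    (hrec : ∀ i n : ℤ, 1 ≤ n → 0 ≤ i → i ≤ n →
      a i (n + 1) = (2 * (i : ℚ) / (n : ℚ)) * a i n + (1 / (n : ℚ)) * a (i - 1) n
        + 4 * a i n) :
    ∀ n : ℕ, 2 ≤ n →
      a 1 (n : ℤ) = ∑ j ∈ Finset.range (n - 1),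
        (4 : ℚ) ^ (n - 2 - j) * ((2 * j + 1).choose (j + 1) : ℚ) := by
  have ha0 : ∀ n : ℕ, 1 ≤ n → a 0 (n : ℤ) = 4 ^ (n - 1) := by
    intro n hn
    induction n with
    | zero => omega
    | succ k ih =>
      rcases Nat.lt_or_ge k 1 with hk | hk
      · interval_cases k
        simpa using h1
      · have hrec0 := hrec 0 (k : ℤ) (by exact_mod_cast hk) le_rfl
          (by exact_mod_cast Nat.zero_le k)
        have hneg : a (0 - 1) (k : ℤ) = 0 := h0 _ _ (Or.inl (by norm_num))
        rw [hneg] at hrec0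
        have ha0k := ih hk
        have ecast : ((k : ℤ) + 1) = ((k + 1 : ℕ) : ℤ) := by push_cast; ring
        rw [ecast] at hrec0
        rw [hrec0, ha0k]
        have : k + 1 - 1 = (k - 1) + 1 := by omega
        rw [this, pow_succ]
        ring
  have hmain : ∀ n : ℕ, 2 ≤ n → a 1 (n : ℤ) = S n := by
    intro n hn
    induction n with
    | zero => omega
    | succ k ih =>
      rcases Nat.lt_or_ge k 2 with hk | hk
      · -- k = 0 or 1; with 2 ≤ k+1 we get k = 1, n = 2
        interval_cases k
        · omega
        · -- a 1 2 = S 2 = 1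
          have hr := hrec 1 1 le_rfl (by norm_num) le_rfl
          have h11 : a 1 1 = 0 := h0 _ _ (Or.inr (Or.inr le_rfl))
          have h01 : a (1 - 1) 1 = 1 := by norm_num [h1]
          rw [h11, h01] at hr
          norm_num at hr
          have e : ((1 + 1 : ℕ) : ℤ) = 2 := by norm_num
          rw [e, hr]
          simp [S]
      · have ihk := ih hk
        obtain ⟨m, rfl⟩ : ∃ m, k = m + 1 := ⟨k - 1, by omega⟩
        have hr := hrec 1 ((m : ℤ) + 1) (by omega) (by norm_num) (by omega)
        have h01 : a (1 - 1) ((m : ℤ) + 1) = 4 ^ m := by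
          have := ha0 (m + 1) (by omega)
          push_cast at this
          simpa using this
        have h1k : a 1 ((m : ℤ) + 1) = S (m + 1) := by
          push_cast at ihk
          exact ihk
        rw [h01, h1k] at hr
        have goalcast : ((m + 1 + 1 : ℕ) : ℤ) = (m : ℤ) + 1 + 1 := by push_cast; ring
        rw [goalcast, hr]
        have hm : ((m : ℚ) + 1) ≠ 0 := by positivity
        have hS : ((m : ℚ) + 1) * S (m + 1 + 1) = (4 * m + 6) * S (m + 1) + 4 ^ m :=
          S_rec m
        push_cast
        field_simp
        linear_combination -hS
  intro n hn
  rw [hmain n hn]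
  rfl
end

section
/- Let A(y,z) = (y/(1-4y)) * exp((z/2) * ((1-4y)^(-1/2) - 1)) as a formal power series in y and z over ℚ. Then A satisfies the partial differential equation (1-4y) * ∂²A/∂y² = z(1 + 2 ∂/∂z)(A/y) + (z+8) * ∂A/∂y + 2z * ∂²A/(∂y∂z), with A(0,z) = 0, (∂A/∂y)(0,z) = 1, and A(y,0) = y/(1-4y). -/
/-!
Put `g = (1 - 4y)⁻¹`, `s = (1 - 4y)^(-1/2)`, `w = (s - 1) / 2` and `E = exp (z w)`, so that
`A = y g E` and `A / y = g E`. The recurrence `(n + 1) C(2n+2, n+1) = 2 (2n + 1) C(2n, n)` says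
`(1 - 4y) s' = 2 s`, whence `g' = 4 g²`, `s' = 2 s g` and `w' = s g`; moreover `∂E/∂z = w E` and
`∂E/∂y = z w' E`. Both sides of the equation are then polynomials in `z` times `E`, and their
coefficients agree modulo `(1 - 4y) g = 1` and `2 w = s - 1`.
-/

open PowerSeries

/-- Partial derivative with respect to the inner variable `y` of an element of
`ℚ[[y]][[z]]` (derivative applied to each coefficient). -/
noncomputable def Dy (A : PowerSeries (PowerSeries ℚ)) : PowerSeries (PowerSeries ℚ) :=
  PowerSeries.mk fun n => derivativeFun (coeff (R := PowerSeries ℚ) n A)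

/-- Partial derivative with respect to the outer variable `z`. -/
noncomputable def Dz (A : PowerSeries (PowerSeries ℚ)) : PowerSeries (PowerSeries ℚ) :=
  derivativeFun A

theorem derivative_ofNat {R : Type*} [CommSemiring R] (n : ℕ) [n.AtLeastTwo] :
    d⁄dX R (ofNat(n) : R⟦X⟧) = 0 :=
  (d⁄dX R).map_natCast n

theorem coeff_Dy (A : ℚ⟦X⟧⟦X⟧) (n : ℕ) : coeff n (Dy A) = d⁄dX ℚ (coeff n A) :=
  coeff_mk _ _

theorem Dz_eq_derivative (A : ℚ⟦X⟧⟦X⟧) : Dz A = d⁄dX ℚ⟦X⟧ A := rfl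

theorem Dy_add (A B : ℚ⟦X⟧⟦X⟧) : Dy (A + B) = Dy A + Dy B := by
  ext n : 1
  simp only [coeff_Dy, map_add]

theorem Dy_mul (A B : ℚ⟦X⟧⟦X⟧) : Dy (A * B) = Dy A * B + A * Dy B := by
  ext n : 1
  simp only [coeff_Dy, coeff_mul, map_add, map_sum, Derivation.leibniz, smul_eq_mul,
    ← Finset.sum_add_distrib]
  exact Finset.sum_congr rfl fun _ _ => by ring

theorem Dy_C (f : ℚ⟦X⟧) : Dy (C f) = C (d⁄dX ℚ f) := by
  ext n : 1
  rw [coeff_Dy, coeff_C, coeff_C]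
  split_ifs <;> simp

theorem Dy_X : Dy (X : ℚ⟦X⟧⟦X⟧) = 0 := by
  ext n : 1
  rw [coeff_Dy, coeff_X, map_zero]
  split_ifs <;> simp

theorem Dz_C_mul (f : ℚ⟦X⟧) (B : ℚ⟦X⟧⟦X⟧) : Dz (C f * B) = C f * Dz B := by
  simp [Dz_eq_derivative, Derivation.leibniz]

noncomputable def expZ (w : ℚ⟦X⟧) : ℚ⟦X⟧⟦X⟧ :=
  mk fun n => C (n.factorial : ℚ)⁻¹ * w ^ n

theorem factorial_succ_inv_mul {K : Type*} [Field K] [CharZero K] (n : ℕ) :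
    ((n + 1).factorial : K)⁻¹ * (n + 1) = (n.factorial : K)⁻¹ := by
  rw [Nat.factorial_succ]
  push_cast
  field_simp

theorem Dz_expZ (w : ℚ⟦X⟧) : Dz (expZ w) = C w * expZ w := by
  ext n : 1
  rw [Dz_eq_derivative, coeff_derivative, coeff_C_mul, expZ, coeff_mk, coeff_mk,
    show (n : ℚ⟦X⟧) + 1 = C ((n : ℚ) + 1) by simp, ← factorial_succ_inv_mul n, map_mul]
  ring

theorem Dy_expZ (w : ℚ⟦X⟧) : Dy (expZ w) = X * (C (d⁄dX ℚ w) * expZ w) := by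
  ext n : 1
  rw [coeff_Dy, expZ, coeff_mk, Derivation.leibniz, derivative_C, smul_zero, add_zero]
  cases n with
  | zero => simp
  | succ n =>
    rw [coeff_succ_X_mul, coeff_C_mul, coeff_mk, derivative_pow, smul_eq_mul,
      ← factorial_succ_inv_mul n]
    simp only [map_mul, Nat.cast_add, Nat.cast_one, add_tsub_cancel_right, map_add, map_natCast,
      map_one]
    ring

theorem one_sub_four_X_mul_derivative_centralBinom {R : Type*} [CommRing R] :
    (1 - 4 * X) * d⁄dX R (mk fun n => ((2 * n).choose n : R)) =
      2 * mk fun n => ((2 * n).choose n : R) := by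
  ext n
  rw [sub_mul, one_mul, mul_assoc, map_sub, coeff_derivative, coeff_mk,
    show (4 : R⟦X⟧) = C 4 from map_ofNat C 4, show (2 : R⟦X⟧) = C 2 from map_ofNat C 2,
    coeff_C_mul, coeff_C_mul, coeff_mk]
  cases n with
  | zero => simp
  | succ n =>
    rw [coeff_succ_X_mul, coeff_derivative, coeff_mk]
    have h := congrArg (Nat.cast : ℕ → R) (Nat.succ_mul_centralBinom_succ (n + 1))
    simp only [Nat.centralBinom_eq_two_mul_choose] at h
    push_cast at h ⊢
    linear_combination h

theorem derivative_eq_of_one_sub_four_X_mul_eq_one {g : ℚ⟦X⟧} (hg : (1 - 4 * X) * g = 1) :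
    d⁄dX ℚ g = 4 * g ^ 2 := by
  rw [(d⁄dX ℚ).leibniz_of_mul_eq_one (by rwa [mul_comm] at hg)]
  simp [show (4 : ℚ⟦X⟧) = C 4 from map_ofNat C 4, mul_comm]

theorem coeff_C_mul_expZ (f w : ℚ⟦X⟧) (n : ℕ) :
    coeff n (C f * expZ w) = f * (C (n.factorial : ℚ)⁻¹ * w ^ n) := by
  rw [coeff_C_mul, expZ, coeff_mk]

theorem constantCoeff_coeff_C_X_mul_expZ (g w : ℚ⟦X⟧) (n : ℕ) :
    constantCoeff (coeff n (C (X * g) * expZ w)) = 0 := by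
  rw [coeff_C_mul_expZ]
  simp

theorem constantCoeff_coeff_Dy_C_X_mul_expZ {g w : ℚ⟦X⟧} (hg : constantCoeff g = 1)
    (hw : constantCoeff w = 0) (n : ℕ) :
    constantCoeff (coeff n (Dy (C (X * g) * expZ w))) = if n = 0 then 1 else 0 := by
  rw [coeff_Dy, ← coeff_zero_eq_constantCoeff_apply, coeff_derivative, coeff_C_mul_expZ,
    mul_assoc, coeff_succ_X_mul, coeff_zero_eq_constantCoeff_apply]
  cases n <;> simp [hg, hw]

theorem pde_C_X_mul_expZ {g s w : ℚ⟦X⟧} (hg : (1 - 4 * X) * g = 1)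
    (hDg : d⁄dX ℚ g = 4 * g ^ 2) (hDs : d⁄dX ℚ s = 2 * s * g) (hDw : d⁄dX ℚ w = s * g)
    (hw : 2 * w = s - 1) :
    C (1 - 4 * X) * Dy (Dy (C (X * g) * expZ w)) =
      X * (C g * expZ w + 2 * Dz (C g * expZ w)) + (X + 8) * Dy (C (X * g) * expZ w) +
        2 * X * Dy (Dz (C (X * g) * expZ w)) := by
  have hg' := congrArg (C (R := ℚ⟦X⟧)) hg
  have hw' := congrArg (C (R := ℚ⟦X⟧)) hw
  simp only [Dy_mul, Dy_C, Dy_add, Dy_X, Dz_C_mul, Dz_expZ, Dy_expZ, Derivation.leibniz, map_add,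
    Derivation.leibniz_pow, derivative_X, derivative_ofNat, mul_one, hDg, hDs, hDw, smul_eq_mul,
    nsmul_eq_mul, Nat.cast_ofNat] at hg' hw' ⊢
  simp only [map_mul, map_add, map_sub, map_one, map_zero, map_ofNat, mul_zero, zero_mul,
    map_pow] at hg' hw' ⊢
  set Y := C (R := ℚ⟦X⟧) (X : ℚ⟦X⟧)
  set G := C (R := ℚ⟦X⟧) g
  set S := C (R := ℚ⟦X⟧) s
  set E := expZ w
  linear_combination
    (E * (8*G + 32*Y*G^2 + X*(2*S*G + 14*Y*S*G^2) + X^2*(Y*S^2*G^2))) * hg' +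
    (E * (X^2*(Y*S*G^2) - X*(G + 4*Y*G^2)) - (2*Y*G^2*X^2*S + G*X)*E) * hw'

theorem A_satisfies_PDE
    (s g w : PowerSeries ℚ)
    (hs : s = PowerSeries.mk fun n => ((2 * n).choose n : ℚ))
    (hg : (1 - 4 * X) * g = 1)
    (hw : w = C (R := ℚ) (1 / 2) * (s - 1))
    (A A' : PowerSeries (PowerSeries ℚ))
    (hA : A = C (R := PowerSeries ℚ) (X * g) *
      PowerSeries.mk (fun n => C (R := ℚ) ((n.factorial : ℚ)⁻¹) * w ^ n))
    (hA' : C (R := PowerSeries ℚ) (X : PowerSeries ℚ) * A' = A) :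
    (C (R := PowerSeries ℚ) (1 - 4 * X)) * Dy (Dy A) =
        X * (A' + 2 * Dz A') + (X + 8) * Dy A + 2 * X * Dy (Dz A)
      ∧ (∀ n : ℕ, constantCoeff (R := ℚ) (coeff (R := PowerSeries ℚ) n A) = 0)
      ∧ (∀ n : ℕ, constantCoeff (R := ℚ) (coeff (R := PowerSeries ℚ) n (Dy A)) =
          if n = 0 then 1 else 0)
      ∧ coeff (R := PowerSeries ℚ) 0 A = X * g := by
  change A = C (X * g) * expZ w at hA
  have h2w : 2 * w = s - 1 := by
    rw [hw, ← mul_assoc, show (2 : ℚ⟦X⟧) = C 2 from map_ofNat C 2, ← map_mul]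
    norm_num
  have hDs : d⁄dX ℚ s = 2 * s * g := by
    have hs' := hs ▸ one_sub_four_X_mul_derivative_centralBinom (R := ℚ)
    linear_combination g * hs' - d⁄dX ℚ s * hg
  have hDw : d⁄dX ℚ w = s * g := by
    simp only [hw, Derivation.leibniz, derivative_C, map_sub, Derivation.map_one_eq_zero, hDs,
      smul_eq_mul, mul_zero, add_zero, sub_zero]
    rw [← mul_assoc, ← mul_assoc, show (2 : ℚ⟦X⟧) = C 2 from map_ofNat C 2, ← map_mul]
    norm_num
  have hA'E : A' = C g * expZ w := by
    refine mul_left_cancel₀ ((map_ne_zero_iff C C_injective).mpr X_ne_zero) ?_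
    rw [hA', hA, ← mul_assoc, ← map_mul]
  subst hA hA'E
  refine ⟨pde_C_X_mul_expZ hg (derivative_eq_of_one_sub_four_X_mul_eq_one hg) hDs hDw h2w,
    constantCoeff_coeff_C_X_mul_expZ g w, constantCoeff_coeff_Dy_C_X_mul_expZ ?_ ?_, ?_⟩
  · simpa using congrArg constantCoeff hg
  · simp [hw, hs]
  · rw [coeff_C_mul_expZ]
    simp
end

section
/- Let α, β be distinct nonzero complex numbers, q = αβ, U_n = (α^n - β^n)/(α-β), V_n = α^n + β^n, and fix k with U_k ≠ 0 and V_k^2 - 4q^k ≠ 0. Then for all j ≥ 2, Σ_{j_1 + j_2 = j} U_{k j_1} U_{k j_2} = (U_k / (V_k^2 - 4 q^k)) * ((j-1) * V_k * U_{kj} - 2j * q^k * U_{k(j-1)}). -/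
/-!
With `a = α ^ k` and `b = β ^ k` one has `U (k * n) = (a ^ n - b ^ n) / (α - β)` and
`V k ^ 2 - 4 * q ^ k = (a - b) ^ 2`, so the claim is a polynomial identity in `a` and `b`.
Expanding the products, the convolution of `a ^ n - b ^ n` with itself is
`(j + 1) * (a ^ j + b ^ j)` minus twice `∑ a ^ i * b ^ (j - i)`, and the latter is the geometric
sum `(a ^ (j + 1) - b ^ (j + 1)) / (a - b)`.
-/

open Finset

section Convolution

variable {R : Type*} [CommRing R]

theorem Finset.Nat.sum_antidiagonal_pow_mul_pow_mul_sub (x y : R) (n : ℕ) :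
    (∑ p ∈ antidiagonal n, x ^ p.1 * y ^ p.2) * (x - y) = x ^ (n + 1) - y ^ (n + 1) := by
  rw [Nat.sum_antidiagonal_eq_sum_range_succ (fun i l => x ^ i * y ^ l), ← geom_sum₂_mul]
  simp only [Nat.add_sub_cancel]

theorem Finset.Nat.sum_antidiagonal_sub_pow_mul_sub_pow (x y : R) (n : ℕ) :
    ∑ p ∈ antidiagonal n, (x ^ p.1 - y ^ p.1) * (x ^ p.2 - y ^ p.2) =
      (n + 1) * (x ^ n + y ^ n) - 2 * ∑ p ∈ antidiagonal n, x ^ p.1 * y ^ p.2 := by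
  have expand : ∀ p ∈ antidiagonal n, (x ^ p.1 - y ^ p.1) * (x ^ p.2 - y ^ p.2) =
      (x ^ n + y ^ n) - x ^ p.1 * y ^ p.2 - x ^ p.swap.1 * y ^ p.swap.2 := by
    intro p hp
    rw [← mem_antidiagonal.mp hp, pow_add, pow_add, Prod.fst_swap, Prod.snd_swap]
    ring
  rw [sum_congr rfl expand, sum_sub_distrib, sum_sub_distrib, sum_const, Nat.card_antidiagonal,
    Nat.sum_antidiagonal_swap (f := fun p => x ^ p.1 * y ^ p.2), nsmul_eq_mul]
  push_cast
  ring

/-- Divided by `(x - y) ^ 3`, this is the self-convolution identity for the sequence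
`(x ^ n - y ^ n) / (x - y)`. -/
theorem Finset.Nat.sub_mul_sum_antidiagonal_sub_pow_mul_sub_pow (x y : R) (n : ℕ) :
    (x - y) * ∑ p ∈ antidiagonal n, (x ^ p.1 - y ^ p.1) * (x ^ p.2 - y ^ p.2) =
      ((n : R) - 1) * (x + y) * (x ^ n - y ^ n) -
        2 * n * (x * y) * (x ^ (n - 1) - y ^ (n - 1)) := by
  rcases n with _ | m
  · simp
  rw [Nat.sum_antidiagonal_sub_pow_mul_sub_pow, Nat.add_sub_cancel]
  push_cast
  linear_combination (-2) * Nat.sum_antidiagonal_pow_mul_pow_mul_sub x y (m + 1)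

end Convolution

theorem self_convolution_two_general (α β : ℂ)
    (q : ℂ) (hq : q = α * β)
    (U V : ℕ → ℂ)
    (hU : ∀ n, U n = (α ^ n - β ^ n) / (α - β))
    (hV : ∀ n, V n = α ^ n + β ^ n)
    (k : ℕ) (hD : (V k) ^ 2 - 4 * q ^ k ≠ 0) :
    ∀ j : ℕ, 2 ≤ j →
      ∑ p ∈ Finset.HasAntidiagonal.antidiagonal j, U (k * p.1) * U (k * p.2) =
        (U k / ((V k) ^ 2 - 4 * q ^ k)) *
          (((j : ℂ) - 1) * V k * U (k * j) - 2 * (j : ℂ) * q ^ k * U (k * (j - 1))) := by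
  intro j _
  set a := α ^ k
  set b := β ^ k
  have hU_mul : ∀ n, U (k * n) = (a ^ n - b ^ n) / (α - β) := fun n => by
    rw [hU, pow_mul, pow_mul]
  have hVk : V k = a + b := hV k
  have hqk : q ^ k = a * b := by rw [hq, mul_pow]
  have hD_eq : V k ^ 2 - 4 * q ^ k = (a - b) ^ 2 := by
    rw [hVk, hqk]
    ring
  have hab : a - b ≠ 0 := pow_ne_zero_iff two_ne_zero |>.mp (hD_eq ▸ hD)
  have hαβ : α - β ≠ 0 := by
    rintro h
    simp [a, b, sub_eq_zero.mp h] at hab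
  have hUk : U k = (a - b) / (α - β) := by simpa using hU_mul 1
  simp only [hU_mul, div_mul_div_comm, ← sum_div]
  rw [hUk, hD_eq, hVk, hqk]
  field_simp
  linear_combination Nat.sub_mul_sum_antidiagonal_sub_pow_mul_sub_pow a b j

theorem self_convolution_two (α β : ℂ) (hαβ : α ≠ β) (hα : α ≠ 0) (hβ : β ≠ 0)
    (q : ℂ) (hq : q = α * β)
    (U V : ℕ → ℂ)
    (hU : ∀ n, U n = (α ^ n - β ^ n) / (α - β))
    (hV : ∀ n, V n = α ^ n + β ^ n)
    (k : ℕ) (hUk : U k ≠ 0) (hD : (V k) ^ 2 - 4 * q ^ k ≠ 0) :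
    ∀ j : ℕ, 2 ≤ j →
      ∑ p ∈ Finset.HasAntidiagonal.antidiagonal j, U (k * p.1) * U (k * p.2) =
        (U k / ((V k) ^ 2 - 4 * q ^ k)) *
          (((j : ℂ) - 1) * V k * U (k * j) - 2 * (j : ℂ) * q ^ k * U (k * (j - 1))) :=
  self_convolution_two_general α β q hq U V hU hV k hD
end

section
/- Let α, β be distinct nonzero complex numbers, q = αβ, U_n = (α^n - β^n)/(α-β), V_n = α^n + β^n, and fix k with U_k ≠ 0 and V_k^2 - 4q^k ≠ 0. Then for all j ≥ 3, Σ_{j_1 + j_2 + j_3 = j} U_{k j_1} U_{k j_2} U_{k j_3} = (U_k / (V_k^2 - 4q^k))^2 * ( (1/2)(j-1)(j-2) V_k^2 U_{kj} - q^k (2j+1)(j-2) V_k U_{k(j-1)} + 2 q^{2k} (j+1)(j-1) U_{k(j-2)} ). -/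
/-!
Put `x = α ^ k`, `y = β ^ k`. Then `(α - β) U (k m) = x ^ m - y ^ m` is the `m`-th coefficient of
`A - B`, where `A = 1 / (1 - x X)` and `B = 1 / (1 - y X)`, so the sum over triples is a coefficient
of `(A - B) ^ 3`. The partial fraction identity `(x - y) A B = x A - y B` writes `(x - y) ^ 2 (A - B) ^ 3`
as a combination of `A ^ 3, A ^ 2, A` and `B ^ 3, B ^ 2, B`, whose coefficients are binomial
multiples of `x ^ m` and `y ^ m`; note also `V k ^ 2 - 4 q ^ k = (x - y) ^ 2`.
-/

open Finset PowerSeries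

namespace Finset.Nat

theorem sum_antidiagonalTuple_succ {M : Type*} [AddCommMonoid M] (k n : ℕ)
    (g : (Fin (k + 1) → ℕ) → M) :
    ∑ f ∈ antidiagonalTuple (k + 1) n, g f =
      ∑ p ∈ antidiagonal n, ∑ f ∈ antidiagonalTuple k p.2, g (Fin.cons p.1 f) := by
  simp only [Finset.sum, antidiagonalTuple, Multiset.Nat.antidiagonalTuple,
    List.Nat.antidiagonalTuple]
  simp only [List.flatMap_def, Multiset.map_coe, List.map_flatten, List.map_map,
    Function.comp_def, Multiset.sum_coe, List.sum_flatten, sum_map_val]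
  rfl

theorem sum_antidiagonalTuple_three {M : Type*} [AddCommMonoid M] (n : ℕ)
    (g : ℕ → ℕ → ℕ → M) :
    ∑ f ∈ antidiagonalTuple 3 n, g (f 0) (f 1) (f 2) =
      ∑ p ∈ antidiagonal n, ∑ q ∈ antidiagonal p.2, g p.1 q.1 q.2 := by
  simp [sum_antidiagonalTuple_succ]

end Finset.Nat

theorem sq_sub_mul_sub_pow_three {S : Type*} [CommRing S] {a b u v t : S}
    (ha : a * (1 - u * t) = 1) (hb : b * (1 - v * t) = 1) :
    (u - v) ^ 2 * (a - b) ^ 3 =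
      (u - v) ^ 2 * (a ^ 3 - b ^ 3) - 3 * (u - v) * (u * a ^ 2 + v * b ^ 2)
        + 3 * (u + v) * (u * a - v * b) := by
  have hab : (u - v) * a * b = u * a - v * b := by
    linear_combination (u * a) * hb - (v * b) * ha
  linear_combination (3 * ((u - v) * b + u) - 3 * ((u - v) * a - v)) * hab

namespace PowerSeries

variable {R : Type*} [CommRing R]

theorem coeff_mul_mul (n : ℕ) (φ ψ χ : R⟦X⟧) :
    coeff n (φ * (ψ * χ)) =
      ∑ f ∈ Nat.antidiagonalTuple 3 n, coeff (f 0) φ * coeff (f 1) ψ * coeff (f 2) χ := by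
  rw [Nat.sum_antidiagonalTuple_three n (fun a b c ↦ coeff a φ * coeff b ψ * coeff c χ)]
  simp only [coeff_mul, mul_sum, mul_assoc]

theorem rescale_mk_one_mul_one_sub (x : R) : rescale x (mk 1) * (1 - C x * X) = 1 := by
  rw [← rescale_X, ← map_one (rescale x), ← map_sub, ← map_mul, mk_one_mul_one_sub_eq_one,
    map_one]

theorem coeff_rescale_mk_one_pow (x : R) (d n : ℕ) :
    coeff n (rescale x (mk 1) ^ (d + 1)) = (d + n).choose d * x ^ n := by
  rw [← map_pow, mk_one_pow_eq_mk_choose_add, coeff_rescale, coeff_mk, mul_comm]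

theorem sq_sub_mul_coeff_rescale_sub_pow_three (x y : R) (m : ℕ) :
    (x - y) ^ 2 * coeff m ((rescale x (mk 1) - rescale y (mk 1)) ^ 3) =
      (x - y) ^ 2 * (2 + m).choose 2 * (x ^ m - y ^ m)
        - 3 * (x - y) * (1 + m) * (x ^ (m + 1) + y ^ (m + 1))
        + 3 * (x + y) * (x ^ (m + 1) - y ^ (m + 1)) := by
  set A := rescale x (mk 1)
  set B := rescale y (mk 1)
  have h : C ((x - y) ^ 2) * (A - B) ^ 3 = C ((x - y) ^ 2) * (A ^ 3 - B ^ 3)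
      - C (3 * (x - y) * x) * A ^ 2 - C (3 * (x - y) * y) * B ^ 2
      + C (3 * (x + y) * x) * A - C (3 * (x + y) * y) * B := by
    simp only [map_mul, map_sub, map_add, map_pow, map_ofNat]
    linear_combination sq_sub_mul_sub_pow_three
      (rescale_mk_one_mul_one_sub x) (rescale_mk_one_mul_one_sub y)
  have hm := congrArg (coeff m) h
  simp only [map_add, map_sub, coeff_C_mul, coeff_rescale_mk_one_pow x 2,
    coeff_rescale_mk_one_pow y 2, coeff_rescale_mk_one_pow x 1, coeff_rescale_mk_one_pow y 1,
    A, B, coeff_rescale, coeff_mk, Pi.one_apply, Nat.choose_one_right] at hm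
  rw [hm]
  push_cast
  ring

end PowerSeries

theorem two_mul_sq_sub_mul_sum_antidiagonalTuple_three_pow_sub_pow {R : Type*} [CommRing R]
    (x y : R) (n : ℕ) :
    2 * (x - y) ^ 2 * ∑ f ∈ Nat.antidiagonalTuple 3 (n + 2),
        (x ^ f 0 - y ^ f 0) * (x ^ f 1 - y ^ f 1) * (x ^ f 2 - y ^ f 2) =
      n * (n + 1) * (x + y) ^ 2 * (x ^ (n + 2) - y ^ (n + 2))
        - 2 * (2 * n + 5) * n * (x * y) * (x + y) * (x ^ (n + 1) - y ^ (n + 1))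
        + 4 * (n + 3) * (n + 1) * (x * y) ^ 2 * (x ^ n - y ^ n) := by
  have hW : mk (fun m ↦ x ^ m - y ^ m) = rescale x (mk 1) - rescale y (mk 1) := by
    ext m
    simp [coeff_rescale]
  have hsum : ∑ f ∈ Nat.antidiagonalTuple 3 (n + 2),
      (x ^ f 0 - y ^ f 0) * (x ^ f 1 - y ^ f 1) * (x ^ f 2 - y ^ f 2) =
        coeff (n + 2) ((rescale x (mk 1) - rescale y (mk 1)) ^ 3) := by
    simp only [← hW, pow_three, coeff_mul_mul, coeff_mk]
  have hchoose : (2 * (2 + (n + 2)).choose 2 : R) = (n + 3) * (n + 4) := by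
    have h : (2 + (n + 2)).choose 2 * 2 = (n + 4) * (n + 3) := by
      rw [show 2 + (n + 2) = n + 3 + 1 by ring, ← Nat.add_one_mul_choose_eq, Nat.choose_one_right]
    have hR := congrArg (Nat.cast (R := R)) h
    push_cast at hR
    linear_combination hR
  rw [hsum, mul_assoc, sq_sub_mul_coeff_rescale_sub_pow_three]
  push_cast
  linear_combination (x - y) ^ 2 * (x ^ (n + 2) - y ^ (n + 2)) * hchoose

theorem self_convolution_three_general (α β : ℂ)
    (q : ℂ) (hq : q = α * β)
    (U V : ℕ → ℂ)
    (hU : ∀ n, U n = (α ^ n - β ^ n) / (α - β))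
    (hV : ∀ n, V n = α ^ n + β ^ n)
    (k : ℕ) (hUk : U k ≠ 0) :
    ∀ j : ℕ, 3 ≤ j →
      ∑ f ∈ Finset.Nat.antidiagonalTuple 3 j, U (k * f 0) * U (k * f 1) * U (k * f 2) =
        (U k / ((V k) ^ 2 - 4 * q ^ k)) ^ 2 *
          ((1 / 2) * ((j : ℂ) - 1) * ((j : ℂ) - 2) * (V k) ^ 2 * U (k * j)
            - q ^ k * (2 * (j : ℂ) + 1) * ((j : ℂ) - 2) * V k * U (k * (j - 1))
            + 2 * q ^ (2 * k) * ((j : ℂ) + 1) * ((j : ℂ) - 1) * U (k * (j - 2))) := by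
  intro j hj
  obtain ⟨n, rfl⟩ : ∃ n, j = n + 2 := ⟨j - 2, by omega⟩
  set x := α ^ k
  set y := β ^ k
  have hUm (m : ℕ) : U (k * m) = (x ^ m - y ^ m) / (α - β) := by rw [hU, pow_mul, pow_mul]
  have hUk' : U k = (x - y) / (α - β) := hU k
  have hVk : V k = x + y := hV k
  have hqk : q ^ k = x * y := by rw [hq, mul_pow]
  have hq2k : q ^ (2 * k) = (x * y) ^ 2 := by rw [pow_mul', hqk]
  obtain ⟨hxy, hd⟩ : x - y ≠ 0 ∧ α - β ≠ 0 := div_ne_zero_iff.mp (hUk' ▸ hUk)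
  rw [hUk', hVk, hqk, hq2k, show n + 2 - 1 = n + 1 by omega, show n + 2 - 2 = n by omega,
    show (x + y) ^ 2 - 4 * (x * y) = (x - y) ^ 2 by ring]
  simp only [hUm, div_mul_div_comm, ← Finset.sum_div]
  field_simp
  push_cast
  linear_combination two_mul_sq_sub_mul_sum_antidiagonalTuple_three_pow_sub_pow x y n

theorem self_convolution_three (α β : ℂ) (hαβ : α ≠ β) (hα : α ≠ 0) (hβ : β ≠ 0)
    (q : ℂ) (hq : q = α * β)
    (U V : ℕ → ℂ)
    (hU : ∀ n, U n = (α ^ n - β ^ n) / (α - β))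
    (hV : ∀ n, V n = α ^ n + β ^ n)
    (k : ℕ) (hUk : U k ≠ 0) (hD : (V k) ^ 2 - 4 * q ^ k ≠ 0) :
    ∀ j : ℕ, 3 ≤ j →
      ∑ f ∈ Finset.Nat.antidiagonalTuple 3 j, U (k * f 0) * U (k * f 1) * U (k * f 2) =
        (U k / ((V k) ^ 2 - 4 * q ^ k)) ^ 2 *
          ((1 / 2) * ((j : ℂ) - 1) * ((j : ℂ) - 2) * (V k) ^ 2 * U (k * j)
            - q ^ k * (2 * (j : ℂ) + 1) * ((j : ℂ) - 2) * V k * U (k * (j - 1))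
            + 2 * q ^ (2 * k) * ((j : ℂ) + 1) * ((j : ℂ) - 1) * U (k * (j - 2))) :=
  self_convolution_three_general α β q hq U V hU hV k hUk
end

section
/- Let T be the shifted Tribonacci sequence: T_0 = T_1 = 1, T_2 = 2, T_n = T_{n-1} + T_{n-2} + T_{n-3} for n ≥ 3 (with the convention T_m = 0 for m < 0). Then for all n ≥ 1, Σ_{i+j=n} T_i T_j = (1/44) * ( 3(n+1) T_{n+1} + 2(4n+7) T_n + 2(8n+19) T_{n-1} + 2(6n+15) T_{n-2} + (9n+27) T_{n-3} ). -/
/-!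
Writing `C n = ∑_{i+j=n} T i * T j`, the generating function of `C` is the square of that of `T`,
and `(1 - x - x² - x³) ∑ T n xⁿ = 1`; hence `C (n+3) = C (n+2) + C (n+1) + C n + T (n+3)`.
Eliminating `T (n+4), …, T n` with the Tribonacci recurrence shows that the right-hand side
satisfies the same inhomogeneous recurrence for `n ≥ 1`, so it suffices to check `n = 1, 2, 3`.
-/

open Finset

theorem tribonacci_rec_of_pos {M : Type*} [AddCommMonoid M] {T : ℤ → M}
    (hneg : ∀ m : ℤ, m < 0 → T m = 0) (h1 : T 1 = T 0) (h2 : T 2 = T 1 + T 0)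
    (hrec : ∀ n : ℤ, 3 ≤ n → T n = T (n - 1) + T (n - 2) + T (n - 3)) {n : ℤ} (hn : 1 ≤ n) :
    T n = T (n - 1) + T (n - 2) + T (n - 3) := by
  obtain rfl | rfl | h3 : n = 1 ∨ n = 2 ∨ 3 ≤ n := by omega
  · simp [h1, hneg]
  · simp [h2, hneg]
  · exact hrec n h3

section

variable {R : Type*} [CommRing R]

theorem sum_antidiagonal_mul_add_three {t : ℕ → R} (h1 : t 1 = t 0) (h2 : t 2 = 2 * t 0)
    (hrec : ∀ n, t (n + 3) = t (n + 2) + t (n + 1) + t n) (n : ℕ) :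
    ∑ p ∈ antidiagonal (n + 3), t p.1 * t p.2 =
      ∑ p ∈ antidiagonal (n + 2), t p.1 * t p.2 + ∑ p ∈ antidiagonal (n + 1), t p.1 * t p.2
        + ∑ p ∈ antidiagonal n, t p.1 * t p.2 + t 0 * t (n + 3) := by
  simp only [Nat.sum_antidiagonal_succ', hrec, zero_add, h1, h2, mul_add, sum_add_distrib]
  ring

def tribonacciConvolutionClosedForm (u : ℤ → R) (k : ℤ) : R :=
  3 * (k + 1) * u (k + 1) + 2 * (4 * k + 7) * u k + 2 * (8 * k + 19) * u (k - 1)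
    + 2 * (6 * k + 15) * u (k - 2) + (9 * k + 27) * u (k - 3)

theorem tribonacciConvolutionClosedForm_add_three {u : ℤ → R} {k : ℤ}
    (hrec : ∀ j, k ≤ j → u j = u (j - 1) + u (j - 2) + u (j - 3)) :
    tribonacciConvolutionClosedForm u (k + 3) =
      tribonacciConvolutionClosedForm u (k + 2) + tribonacciConvolutionClosedForm u (k + 1)
        + tribonacciConvolutionClosedForm u k + 44 * u (k + 3) := by
  have e0 := hrec k le_rfl
  have e1 := hrec (k + 1) (by omega)
  have e2 := hrec (k + 2) (by omega)
  have e3 := hrec (k + 3) (by omega)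
  have e4 := hrec (k + 4) (by omega)
  simp only [tribonacciConvolutionClosedForm]
  push_cast
  ring_nf at e0 e1 e2 e3 e4 ⊢
  rw [e4, e3, e2, e1, e0]
  ring

theorem tribonacciConvolutionClosedForm_eq {u : ℤ → R}
    (hneg : ∀ m : ℤ, m < 0 → u m = 0) (h0 : u 0 = 1) (h1 : u 1 = 1) (h2 : u 2 = 2)
    (hrec : ∀ n : ℤ, 3 ≤ n → u n = u (n - 1) + u (n - 2) + u (n - 3)) {n : ℕ} (hn : 1 ≤ n) :
    tribonacciConvolutionClosedForm u n = 44 * ∑ p ∈ antidiagonal n, u p.1 * u p.2 := by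
  have hrec₁ {j : ℤ} (hj : 1 ≤ j) : u j = u (j - 1) + u (j - 2) + u (j - 3) :=
    tribonacci_rec_of_pos hneg (by rw [h0, h1]) (by rw [h0, h1, h2]; norm_num) hrec hj
  have h3 : u 3 = 4 := by rw [hrec 3 le_rfl]; norm_num [h0, h1, h2]
  have h4 : u 4 = 7 := by rw [hrec 4 (by norm_num)]; norm_num [h1, h2, h3]
  induction n using Nat.strong_induction_on with
  | _ n ih =>
    match n, hn with
    | 1, _ | 2, _ | 3, _ =>
      simp [tribonacciConvolutionClosedForm, Nat.sum_antidiagonal_succ, hneg, h0, h1, h2, h3, h4]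
      norm_num
    | m + 4, _ =>
      have hC := sum_antidiagonal_mul_add_three (t := fun i : ℕ => u i)
        (by simp [h0, h1]) (by simp [h0, h2])
        (fun i => by push_cast; rw [hrec₁ (by omega)]; ring_nf) (m + 1)
      have hF := tribonacciConvolutionClosedForm_add_three (u := u) (k := m + 1)
        (fun j hj => hrec₁ (by omega))
      have i1 := ih (m + 1) (by omega) (by omega)
      have i2 := ih (m + 2) (by omega) (by omega)
      have i3 := ih (m + 3) (by omega) (by omega)
      push_cast at hC hF i1 i2 i3 ⊢
      -- bring the indices `↑(m + 4)`, `↑m + 1 + 3`, … to a common normal form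
      ring_nf at hC hF i1 i2 i3 ⊢
      rw [h0, one_mul] at hC
      linear_combination hF - 44 * hC + i1 + i2 + i3

end

theorem tribonacci_self_convolution (T : ℤ → ℤ)
    (hneg : ∀ m : ℤ, m < 0 → T m = 0)
    (h0 : T 0 = 1) (h1 : T 1 = 1) (h2 : T 2 = 2)
    (hrec : ∀ n : ℤ, 3 ≤ n → T n = T (n - 1) + T (n - 2) + T (n - 3)) :
    ∀ n : ℕ, 1 ≤ n →
      ∑ p ∈ Finset.HasAntidiagonal.antidiagonal n, (T p.1 * T p.2 : ℚ) =
        (1 / 44) * (3 * ((n : ℚ) + 1) * (T ((n : ℤ) + 1) : ℚ)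
          + 2 * (4 * (n : ℚ) + 7) * (T (n : ℤ) : ℚ)
          + 2 * (8 * (n : ℚ) + 19) * (T ((n : ℤ) - 1) : ℚ)
          + 2 * (6 * (n : ℚ) + 15) * (T ((n : ℤ) - 2) : ℚ)
          + (9 * (n : ℚ) + 27) * (T ((n : ℤ) - 3) : ℚ)) := by
  intro n hn
  have h := tribonacciConvolutionClosedForm_eq (u := fun j => (T j : ℚ))
    (fun m hm => by simp [hneg m hm]) (by simp [h0]) (by simp [h1]) (by simp [h2])
    (fun m hm => by simp [hrec m hm]) hn
  simp only [tribonacciConvolutionClosedForm] at h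
  push_cast at h
  linarith
end

section
/- Let F(x) = 1/(1 - x - x^2 - x^3) in ℝ[[x]]. Then 176 * F(x)^2 = 4(9x^4 + 12x^3 + 16x^2 + 8x + 3) * F'(x) + 8(27(x^3 + x^2 + x) + 7) * F(x) + 108, as an identity of formal power series. -/
open PowerSeries

theorem tribonacci_gf_square (F : PowerSeries ℚ)
    (hF : (1 - X - X ^ 2 - X ^ 3) * F = 1) :
    176 * F ^ 2 =
      4 * (9 * X ^ 4 + 12 * X ^ 3 + 16 * X ^ 2 + 8 * X + 3) * derivativeFun F
        + 8 * (27 * (X ^ 3 + X ^ 2 + X) + 7) * F + 108 := by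
  have hP : (1 - X - X ^ 2 - X ^ 3 : ℚ⟦X⟧) ≠ 0 := by
    intro h
    have := congrArg (constantCoeff : ℚ⟦X⟧ →+* ℚ) h
    simp at this
  have hDP : derivativeFun (1 - X - X ^ 2 - X ^ 3 : ℚ⟦X⟧)
      = -(1 + 2 * X + 3 * X ^ 2) := by
    show d⁄dX ℚ (1 - X - X ^ 2 - X ^ 3 : ℚ⟦X⟧) = -(1 + 2 * X + 3 * X ^ 2)
    simp [pow_succ]
    ring
  have hD : (1 - X - X ^ 2 - X ^ 3) * derivativeFun F
      = (1 + 2 * X + 3 * X ^ 2) * F := by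
    have h0 : derivativeFun ((1 - X - X ^ 2 - X ^ 3) * F) = 0 := by
      rw [hF]; exact derivativeFun_one
    rw [derivativeFun_mul, hDP, smul_eq_mul, smul_eq_mul] at h0
    linear_combination h0
  refine mul_left_cancel₀ (pow_ne_zero 2 hP) ?_
  linear_combination
    (176 * (1 - X - X ^ 2 - X ^ 3) * F + 108 * (1 - X - X ^ 2 - X ^ 3) ^ 2) * hF
      - 4 * (9 * X ^ 4 + 12 * X ^ 3 + 16 * X ^ 2 + 8 * X + 3)
        * (1 - X - X ^ 2 - X ^ 3) * hD
end

section
/- Let Q(x) = x^2 - p x + q over ℂ with distinct roots (Δ = p^2 - 4q ≠ 0), let F = -1/Q, and define polynomials α_{i,n}(x) by α_{i,n} = 0 for i < 0 or i ≥ n, α_{0,1} = 1, and α_{i,n+1} = (1/(Δ n)) * (Q' * α_{i,n}' + Q' * α_{i-1,n} + 4n * α_{i,n}). Then each α_{i,n} is a scalar multiple of (Q')^i, i.e. there exists a constant c ∈ ℚ(Δ-coefficients) with α_{i,n}(x) = c * (Q'(x))^i. -/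
open Polynomial

/-!
Write `D = Q'`. Since `D' = 2` is constant, the line `ℂ ∙ D ^ i` is preserved by `f ↦ D * f'`,
and `D *` maps `ℂ ∙ D ^ (i - 1)` into it; so the recurrence keeps every `α_{i,n}` on its line,
by induction on `n`.
-/

section SpanPow

variable {R : Type*} [CommRing R] {D f : R[X]} {a : R}

theorem mul_mem_span_pow_succ {i : ℕ} (hf : f ∈ R ∙ D ^ i) : D * f ∈ R ∙ D ^ (i + 1) := by
  obtain ⟨c, rfl⟩ := Submodule.mem_span_singleton.mp hf
  exact Submodule.mem_span_singleton.mpr ⟨c, by rw [mul_smul_comm, pow_succ']⟩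

theorem mul_derivative_mem_span_pow (hD : derivative D = C a) {i : ℕ} (hf : f ∈ R ∙ D ^ i) :
    D * derivative f ∈ R ∙ D ^ i := by
  obtain ⟨c, rfl⟩ := Submodule.mem_span_singleton.mp hf
  cases i with
  | zero => simp
  | succ j =>
    refine Submodule.mem_span_singleton.mpr ⟨c * ((j + 1) * a), ?_⟩
    rw [derivative_smul, derivative_pow, hD, smul_eq_C_mul, smul_eq_C_mul]
    simp only [C_mul, Nat.add_sub_cancel, Nat.cast_add, Nat.cast_one, C_add, C_1]
    ring

end SpanPow

theorem alpha_poly_proportional_to_Qderiv_pow_general (p q : ℂ)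
    (Q : ℂ[X]) (hQ : Q = X ^ 2 - C p * X + C q)
    (A : ℤ → ℤ → ℂ[X])
    (h0 : ∀ i n : ℤ, (i < 0 ∨ i ≥ n) → A i n = 0)
    (h1 : A 0 1 = 1)
    (hrec : ∀ i n : ℤ, 1 ≤ n →
      A i (n + 1) = C (1 / ((p ^ 2 - 4 * q) * (n : ℂ))) *
        (derivative Q * derivative (A i n) + derivative Q * A (i - 1) n
          + C (4 * (n : ℂ)) * A i n)) :
    ∀ i n : ℕ, ∃ c : ℂ, A (i : ℤ) (n : ℤ) = C c * (derivative Q) ^ i := by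
  set D := derivative Q
  have hD : derivative D = C 2 := by
    simp [D, hQ, C_ofNat, one_add_one_eq_two]
  have hspan : ∀ n : ℕ, 1 ≤ n → ∀ i : ℕ, A i n ∈ ℂ ∙ D ^ i := by
    intro n hn
    induction n, hn using Nat.le_induction with
    | base =>
      rintro (_ | i)
      · simp [h1]
      · simp [h0 (i + 1) 1 (Or.inr (by omega))]
    | succ m hm ih =>
      intro i
      have hprev : D * A (i - 1) m ∈ ℂ ∙ D ^ i := by
        rcases i with _ | j
        · simp [h0 (-1) m (Or.inl (by omega))]
        · simpa using mul_mem_span_pow_succ (ih j)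
      rw [Nat.cast_succ, hrec i m (by exact_mod_cast hm), ← smul_eq_C_mul, ← smul_eq_C_mul]
      exact Submodule.smul_mem _ _ (add_mem (add_mem (mul_derivative_mem_span_pow hD (ih i))
        hprev) (Submodule.smul_mem _ _ (ih i)))
  intro i n
  rcases Nat.eq_zero_or_pos n with rfl | hn
  · exact ⟨0, by simp [h0 i 0 (Or.inr (by omega))]⟩
  · obtain ⟨c, hc⟩ := Submodule.mem_span_singleton.mp (hspan n hn i)
    exact ⟨c, by rw [← hc, smul_eq_C_mul]⟩

theorem alpha_poly_proportional_to_Qderiv_pow (p q : ℂ) (hΔ : p ^ 2 - 4 * q ≠ 0)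
    (Q : ℂ[X]) (hQ : Q = X ^ 2 - C p * X + C q)
    (A : ℤ → ℤ → ℂ[X])
    (h0 : ∀ i n : ℤ, (i < 0 ∨ i ≥ n) → A i n = 0)
    (h1 : A 0 1 = 1)
    (hrec : ∀ i n : ℤ, 1 ≤ n →
      A i (n + 1) = C (1 / ((p ^ 2 - 4 * q) * (n : ℂ))) *
        (derivative Q * derivative (A i n) + derivative Q * A (i - 1) n
          + C (4 * (n : ℂ)) * A i n)) :
    ∀ i n : ℕ, ∃ c : ℂ, A (i : ℤ) (n : ℤ) = C c * (derivative Q) ^ i :=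
  alpha_poly_proportional_to_Qderiv_pow_general p q Q hQ A h0 h1 hrec
end
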